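/- arXiv:1412.8721 — 2 statements merged into one kernel-verified Lean document; each statement's English description precedes it below -/
import Mathlib

section
/- For all n ≥ 0, ∏_{i=0}^{n-1}(x + (a+b)·r + a·i) = Σ_{k=0}^{n} G_{a,b}(n,k;r) · ∏_{i=0}^{k-1}(x − b·i), as an identity of polynomials in x (or for all x in a commutative ring). -/
open Finset

/-- The generalized r-Lah numbers `G_{a,b}(n,k;r)`. -/
def genLah {R : Type*} [CommRing R] (a b : R) (r : ℕ) : ℕ → ℕ → R
  | 0, 0 => 1
  | 0, _ + 1 => 0
  | n + 1, 0 => (a * ((n : R) + (r : R)) + b * (r : R)) * genLah a b r n 0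
  | n + 1, k + 1 => genLah a b r n k +
      (a * (n : R) + b * ((k : R) + 1) + (a + b) * (r : R)) * genLah a b r n (k + 1)

/-!
Write `P k = ∏_{i<k} (x - b i)`. Since `P (k+1) = (x - b k) P k`, multiplication by
`x + (a+b) r + a n` sends `P k` to `P (k+1) + (a n + b k + (a+b) r) P k`, which is exactly the
transpose of the recurrence of `G_{a,b}`; induction on `n` then gives the identity.
-/

section

variable {R : Type*} [CommRing R] (a b : R) (r : ℕ)

theorem genLah_eq_zero_of_lt : ∀ {n k : ℕ}, n < k → genLah a b r n k = 0
  | 0, _ + 1, _ => rfl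
  | n + 1, k + 1, h => by
    rw [genLah, genLah_eq_zero_of_lt (by omega), genLah_eq_zero_of_lt (by omega)]
    ring

theorem genLah_succ_zero (n : ℕ) :
    genLah a b r (n + 1) 0 = (a * n + b * (0 : ℕ) + (a + b) * r) * genLah a b r n 0 := by
  rw [genLah]
  push_cast
  ring

theorem genLah_succ_succ (n k : ℕ) :
    genLah a b r (n + 1) (k + 1) =
      genLah a b r n k + (a * n + b * (k + 1 : ℕ) + (a + b) * r) * genLah a b r n (k + 1) := by
  rw [genLah]
  push_cast
  ring

theorem sum_genLah_succ_mul (n : ℕ) (f : ℕ → R) :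
    ∑ k ∈ range (n + 2), genLah a b r (n + 1) k * f k =
      ∑ k ∈ range (n + 1), genLah a b r n k * (f (k + 1) + (a * n + b * k + (a + b) * r) * f k) := by
  set g : ℕ → R := fun k ↦ (a * n + b * k + (a + b) * r) * genLah a b r n k * f k
  have hg : ∑ k ∈ range (n + 1), g (k + 1) + g 0 = ∑ k ∈ range (n + 1), g k := by
    have hlast : g (n + 1) = 0 := by simp [g, genLah_eq_zero_of_lt a b r (Nat.lt_succ_self n)]
    rw [sum_range_succ, sum_range_succ' g n, hlast, add_zero]
  calc ∑ k ∈ range (n + 2), genLah a b r (n + 1) k * f k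
      = ∑ k ∈ range (n + 1), genLah a b r n k * f (k + 1) +
          (∑ k ∈ range (n + 1), g (k + 1) + g 0) := by
        rw [sum_range_succ', genLah_succ_zero]
        simp only [genLah_succ_succ, add_mul, sum_add_distrib, g]
        ring
    _ = _ := by
        rw [hg, ← sum_add_distrib]
        exact sum_congr rfl fun k _ ↦ by ring

end

theorem genLah_horizontal_generating {R : Type*} [CommRing R] (a b : R) (r n : ℕ) (x : R) :
    ∏ i ∈ range n, (x + (a + b) * (r : R) + a * (i : R)) =
      ∑ k ∈ range (n + 1), genLah a b r n k * ∏ i ∈ range k, (x - b * (i : R)) := by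
  induction n with
  | zero => simp [genLah]
  | succ n ih =>
    rw [sum_genLah_succ_mul, prod_range_succ, ih, sum_mul]
    refine sum_congr rfl fun k _ ↦ ?_
    rw [prod_range_succ]
    ring
end

section
/- For 0 ≤ k ≤ n and r ≥ 0, the generalized r-Lah numbers satisfy the orthogonality relation δ_{n,k} = Σ_{j=k}^{n} (−1)^{j−k} · G_{a,b}(n,j;r) · G_{b,a}(j,k;r). -/
/-!
Both `genLah a b r` and `genLah b a r` are connection coefficients between Newton bases, for the
node sequences `α i = a (i + r)`, `β i = b (i + r)` and the swapped pair. For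
`T(n, k) = ∑ j, (-1)^j C_{α,β}(n, j) C_{β,α}(j, k)`, the row recurrence of the first array and
the column recurrence of the second combine into `T(n+1, k) = (α n - α k) T(n, k) - T(n, k-1)`, so
`T(n, k) = (-1)^n δ_{n,k}` by induction on `n`; the factor `α n - α k` vanishes exactly where the
induction hypothesis is nonzero.
-/

open Finset

/-- The connection coefficients between Newton bases,
`∏ i < n, (X + α i) = ∑ k, connectionCoeff α β n k * ∏ i < k, (X - β i)`. -/
def connectionCoeff {R : Type*} [CommRing R] (α β : ℕ → R) : ℕ → ℕ → R
  | 0, 0 => 1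
  | 0, _ + 1 => 0
  | n + 1, 0 => (α n + β 0) * connectionCoeff α β n 0
  | n + 1, k + 1 =>
      connectionCoeff α β n k + (α n + β (k + 1)) * connectionCoeff α β n (k + 1)

namespace connectionCoeff

variable {R : Type*} [CommRing R] (α β : ℕ → R)

theorem eq_zero_of_lt {n k : ℕ} (h : n < k) : connectionCoeff α β n k = 0 := by
  induction n generalizing k with
  | zero => obtain ⟨k, rfl⟩ := Nat.exists_eq_add_one_of_ne_zero h.ne'; rfl
  | succ n ih =>
    obtain ⟨k, rfl⟩ := Nat.exists_eq_add_one_of_ne_zero (by omega : k ≠ 0)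
    simp only [connectionCoeff, ih (by omega : n < k), ih (by omega : n < k + 1), mul_zero,
      add_zero]

theorem sum_succ_alternating (x : ℕ → R) (n : ℕ) :
    ∑ j ∈ range (n + 2), (-1) ^ j * connectionCoeff α β (n + 1) j * x j =
      ∑ j ∈ range (n + 1),
        (-1) ^ j * connectionCoeff α β n j * ((α n + β j) * x j - x (j + 1)) := by
  set f : ℕ → R := fun j => (-1) ^ j * connectionCoeff α β n j * ((α n + β j) * x j)
  have hshift : ∑ j ∈ range (n + 1), f (j + 1) + f 0 = ∑ j ∈ range (n + 1), f j := by
    rw [← sum_range_succ', sum_range_succ, add_eq_left]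
    simp [f, eq_zero_of_lt α β (Nat.lt_succ_self n)]
  have hsucc :
      ∑ j ∈ range (n + 1), (-1) ^ (j + 1) * connectionCoeff α β (n + 1) (j + 1) * x (j + 1) =
        ∑ j ∈ range (n + 1), f (j + 1) -
          ∑ j ∈ range (n + 1), (-1) ^ j * connectionCoeff α β n j * x (j + 1) := by
    rw [← sum_sub_distrib]
    refine sum_congr rfl fun j _ => ?_
    simp only [f, connectionCoeff]
    ring
  have hzero : (-1) ^ 0 * connectionCoeff α β (n + 1) 0 * x 0 = f 0 := by
    simp only [f, connectionCoeff]
    ring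
  rw [sum_range_succ', hsucc, hzero, sub_add_eq_add_sub, hshift, ← sum_sub_distrib]
  refine sum_congr rfl fun j _ => ?_
  simp only [f]
  ring

def signedProd (n k : ℕ) : R :=
  ∑ j ∈ range (n + 1), (-1) ^ j * connectionCoeff α β n j * connectionCoeff β α j k

theorem signedProd_succ_zero (n : ℕ) :
    signedProd α β (n + 1) 0 = (α n - α 0) * signedProd α β n 0 := by
  rw [signedProd, sum_succ_alternating, signedProd, mul_sum]
  refine sum_congr rfl fun j _ => ?_
  simp only [connectionCoeff]
  ring

theorem signedProd_succ_succ (n k : ℕ) :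
    signedProd α β (n + 1) (k + 1) =
      (α n - α (k + 1)) * signedProd α β n (k + 1) - signedProd α β n k := by
  rw [signedProd, sum_succ_alternating, signedProd, signedProd, mul_sum, ← sum_sub_distrib]
  refine sum_congr rfl fun j _ => ?_
  simp only [connectionCoeff]
  ring

theorem signedProd_eq (n k : ℕ) : signedProd α β n k = if n = k then (-1) ^ n else 0 := by
  induction n generalizing k with
  | zero => cases k <;> simp [signedProd, connectionCoeff]
  | succ n ih =>
    cases k with
    | zero => rcases n with _ | n <;> simp [signedProd_succ_zero, ih]
    | succ k =>
      rw [signedProd_succ_succ, ih, ih]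
      by_cases h : n = k
      · subst h; simp [pow_succ]
      · by_cases h' : n = k + 1
        · subst h'; simp
        · simp [h, h']

theorem orthogonality (n k : ℕ) :
    ∑ j ∈ Icc k n, (-1) ^ (j - k) * connectionCoeff α β n j * connectionCoeff β α j k =
      if n = k then 1 else 0 := by
  have hsign : ∀ j, (-1) ^ (j - k) * connectionCoeff α β n j * connectionCoeff β α j k =
      (-1) ^ k * ((-1) ^ j * connectionCoeff α β n j * connectionCoeff β α j k) := by
    intro j
    rcases le_or_gt k j with hkj | hjk
    · have hsq : (-1 : R) ^ k * (-1) ^ k = 1 := by rw [← mul_pow]; simp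
      rw [← pow_mul_pow_sub (-1 : R) hkj]
      linear_combination
        (-(-1) ^ (j - k) * connectionCoeff α β n j * connectionCoeff β α j k) * hsq
    · simp [eq_zero_of_lt β α hjk]
  calc ∑ j ∈ Icc k n, (-1) ^ (j - k) * connectionCoeff α β n j * connectionCoeff β α j k
      = ∑ j ∈ range (n + 1),
          (-1) ^ (j - k) * connectionCoeff α β n j * connectionCoeff β α j k := by
        refine sum_subset (fun j hj => ?_) (fun j hj hj' => ?_)
        · simp only [mem_Icc, mem_range] at hj ⊢
          omega
        · have hjk : j < k := by
            simp only [mem_Icc, mem_range] at hj hj'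
            omega
          simp [eq_zero_of_lt β α hjk]
    _ = (-1) ^ k * signedProd α β n k := by
        rw [signedProd, mul_sum]
        exact sum_congr rfl fun j _ => hsign j
    _ = if n = k then 1 else 0 := by
        rw [signedProd_eq]
        split_ifs with h
        · subst h
          rw [← mul_pow]
          simp
        · simp

end connectionCoeff

theorem genLah_eq_connectionCoeff {R : Type*} [CommRing R] (a b : R) (r : ℕ) :
    genLah a b r = connectionCoeff (fun i => a * (i + r)) (fun i => b * (i + r)) := by
  funext n k
  induction n generalizing k with
  | zero => cases k <;> rfl
  | succ n ih =>
    cases k <;> simp only [genLah, connectionCoeff, ih] <;> push_cast <;> ring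

theorem genLah_orthogonality_general {R : Type*} [CommRing R] (a b : R) (r n k : ℕ) :
    (if n = k then (1 : R) else 0) =
      ∑ j ∈ Icc k n, (-1) ^ (j - k) * genLah a b r n j * genLah b a r j k := by
  rw [genLah_eq_connectionCoeff, genLah_eq_connectionCoeff, connectionCoeff.orthogonality]

theorem genLah_orthogonality {R : Type*} [CommRing R] (a b : R) (r n k : ℕ) (hkn : k ≤ n) :
    (if n = k then (1 : R) else 0) =
      ∑ j ∈ Icc k n, (-1) ^ (j - k) * genLah a b r n j * genLah b a r j k :=
  genLah_orthogonality_general a b r n k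
end
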